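/- (Theorem 7.1.) Let p > 0 and let h : (0,∞) → ℝ be C², nonnegative, decreasing and convex, such that y h''(y) + h'(y) ≥ 0 for all y > 0 and the function y ↦ y² h''(y) is decreasing. Fix t > 0 and y > 0. For a continuous function v : [0,t] → (0,∞) define z(s) = e^{(t−s)/p} y + ∫_s^t e^{(s'−s)/p} v(s') ds' for 0 ≤ s ≤ t, and F(t, y, v) = (1/p) ∫_0^t h(z(s)/v(s)) e^{−(t−s)/p} v(s) ds − (1 + y/p) ∫_0^t h'(z(s)/v(s)) ds. Then: (i) if 0 < v(s) ≤ 1 for all s ∈ [0,t], then F(t, y, v) ≤ F(t, y, 1), where 1 denotes the constant function equal to 1; (ii) if v(s) ≥ 1 for all s ∈ [0,t], then F(t, y, v) ≥ F(t, y, 1). That is, the maximum of F(t,y,·) over {0 < v ≤ 1} and the minimum of F(t,y,·) over {v ≥ 1} are both attained at v ≡ 1. -/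

import Mathlib

open MeasureTheory Real Filter Set

/-- The trajectory z(s) = e^{(t−s)/p} y + ∫_s^t e^{(s'−s)/p} v(s') ds'. -/
noncomputable def traj (p y t : ℝ) (v : ℝ → ℝ) (s : ℝ) : ℝ :=
  Real.exp ((t - s) / p) * y + ∫ s' in s..t, Real.exp ((s' - s) / p) * v s'

/-- The functional F(t,y,v) = (1/p)∫_0^t h(z(s)/v(s)) e^{−(t−s)/p} v(s) ds
− (1 + y/p)∫_0^t h'(z(s)/v(s)) ds (Bochner form, used for controls 0 < v ≤ 1). -/
noncomputable def Ffun (p : ℝ) (h : ℝ → ℝ) (t y : ℝ) (v : ℝ → ℝ) : ℝ :=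
  (1 / p) * (∫ s in (0:ℝ)..t, h (traj p y t v s / v s) * Real.exp (-(t - s) / p) * v s)
    - (1 + y / p) * ∫ s in (0:ℝ)..t, deriv h (traj p y t v s / v s)

/-- The functional F(t,y,v) written as a sum of two nonnegative lower Lebesgue
integrals, with values in [0,∞] (used for controls v ≥ 1, where the integrals may
be infinite): F = (1/p)∫_0^t h(z/v) e^{−(t−s)/p} v + (1 + y/p)∫_0^t (−h'(z/v)). -/
noncomputable def FfunL (p : ℝ) (h : ℝ → ℝ) (t y : ℝ) (v : ℝ → ℝ) : ENNReal :=
  ENNReal.ofReal (1 / p)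
      * (∫⁻ s in Set.Ioc (0:ℝ) t,
          ENNReal.ofReal (h (traj p y t v s / v s) * Real.exp (-(t - s) / p) * v s))
    + ENNReal.ofReal (1 + y / p)
      * ∫⁻ s in Set.Ioc (0:ℝ) t, ENNReal.ofReal (-(deriv h (traj p y t v s / v s)))

/-!
A switching argument. For `σ ∈ [0, t]` let `N(σ)` be the cost of the control equal to `1` on
`[0, σ]` and to `v` on `[σ, t]`. On `[0, σ]` the trajectory is explicit, so `N(σ)` has a closed
form, and `N(0) = F(t, y, v)`, `N(t) = F(t, y, 1)`. Writing `Z = z(σ)` and `ζ ≥ Z` for the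
initial state of the switched trajectory, `N'(σ)` combines `h(Z) - v h(Z/v)`, `h'(Z/v) - h'(Z)`,
`h'(ζ) - h'(Z)` and `∫_Z^ζ h'(ξ)/(ξ + p) dξ ≥ (h(ζ) - h(Z))/(Z + p)`. Monotonicity of `h` and of
`x h'(x)`, positivity of `h` and the tangent inequality for convex `h` show that `N'(σ)` has the
sign of `1 - v(σ)`, so `N` is monotone between its two endpoint values.
-/

open Topology

lemma AntitoneOn.deriv_nonpos {f : ℝ → ℝ} {s : Set ℝ} {x : ℝ} (hf : AntitoneOn f s)
    (hs : IsOpen s) (hx : x ∈ s) : deriv f x ≤ 0 :=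
  derivWithin_of_isOpen (f := f) hs hx ▸ hf.derivWithin_nonpos

lemma ConvexOn.add_deriv_mul_sub_le {f : ℝ → ℝ} {S : Set ℝ} {x y : ℝ} (hf : ConvexOn ℝ S f)
    (hx : x ∈ S) (hy : y ∈ S) (hxy : x ≤ y) (hfd : DifferentiableAt ℝ f y) :
    f y + deriv f y * (x - y) ≤ f x := by
  rcases hxy.eq_or_lt with rfl | hlt
  · simp
  have hslope := hf.slope_le_deriv hx hy hlt hfd
  rw [slope_def_field, div_le_iff₀ (sub_pos.2 hlt)] at hslope
  linarith

section MonotoneMul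

variable {g : ℝ → ℝ} {x w : ℝ}

lemma apply_div_le_mul_of_monotoneOn_mul (hg : MonotoneOn (fun x => x * g x) (Ioi 0))
    (hx : 0 < x) (hw : 1 ≤ w) : g (x / w) ≤ w * g x := by
  have hw0 : 0 < w := by linarith
  have hmono : x / w * g (x / w) ≤ x * g x := hg (div_pos hx hw0) hx (div_le_self hx.le hw)
  rw [div_mul_eq_mul_div, div_le_iff₀ hw0] at hmono
  nlinarith

lemma mul_le_apply_div_of_monotoneOn_mul (hg : MonotoneOn (fun x => x * g x) (Ioi 0))
    (hx : 0 < x) (hw0 : 0 < w) (hw : w ≤ 1) : w * g x ≤ g (x / w) := by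
  have hmono : x * g x ≤ x / w * g (x / w) :=
    hg hx (div_pos hx hw0) (le_div_self hx.le hw0 hw)
  rw [div_mul_eq_mul_div, le_div_iff₀ hw0] at hmono
  nlinarith

end MonotoneMul

section Profile

variable {h : ℝ → ℝ} {x : ℝ}

lemma hasDerivAt_of_contDiffOn_Ioi (hh : ContDiffOn ℝ 2 h (Ioi 0)) (hx : 0 < x) :
    HasDerivAt h (deriv h x) x :=
  ((hh.contDiffAt (Ioi_mem_nhds hx)).differentiableAt two_ne_zero).hasDerivAt

lemma continuousOn_deriv_of_contDiffOn_Ioi (hh : ContDiffOn ℝ 2 h (Ioi 0)) :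
    ContinuousOn (deriv h) (Ioi 0) :=
  hh.continuousOn_deriv_of_isOpen isOpen_Ioi (by norm_num)

lemma hasDerivAt_deriv_of_contDiffOn_Ioi (hh : ContDiffOn ℝ 2 h (Ioi 0)) (hx : 0 < x) :
    HasDerivAt (deriv h) (iteratedDeriv 2 h x) x := by
  rw [iteratedDeriv_succ, iteratedDeriv_one]
  exact (((hh.deriv_of_isOpen (m := 1) isOpen_Ioi (by norm_num)).contDiffAt
    (Ioi_mem_nhds hx)).differentiableAt one_ne_zero).hasDerivAt

lemma monotoneOn_mul_deriv (hh : ContDiffOn ℝ 2 h (Ioi 0))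
    (hineq : ∀ z > (0:ℝ), 0 ≤ z * iteratedDeriv 2 h z + deriv h z) :
    MonotoneOn (fun x => x * deriv h x) (Ioi 0) := by
  have hder : ∀ x ∈ Ioi (0:ℝ), HasDerivAt (fun x => x * deriv h x)
      (x * iteratedDeriv 2 h x + deriv h x) x := fun x hx =>
    ((hasDerivAt_id' x).mul (hasDerivAt_deriv_of_contDiffOn_Ioi hh hx)).congr_deriv (by ring)
  refine monotoneOn_of_hasDerivWithinAt_nonneg (f' := fun x => x * iteratedDeriv 2 h x + deriv h x)
    (convex_Ioi 0)
    (fun x hx => (hder x hx).continuousAt.continuousWithinAt) ?_ ?_ <;> rw [interior_Ioi]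
  · exact fun x hx => (hder x hx).hasDerivWithinAt
  · exact hineq

end Profile

section Trajectory

variable {p t y : ℝ} {v : ℝ → ℝ} {σ : ℝ}

lemma traj_self : traj p y t v t = y := by
  simp [traj]

lemma continuousOn_exp_mul (hv : ContinuousOn v (Icc 0 t)) :
    ContinuousOn (fun s => exp (s / p) * v s) (Icc 0 t) :=
  (continuous_exp.comp (continuous_id.div_const p)).continuousOn.mul hv

lemma intervalIntegrable_exp_mul (hv : ContinuousOn v (Icc 0 t)) {a b : ℝ}
    (hab : uIcc a b ⊆ Icc 0 t) :
    IntervalIntegrable (fun s => exp (s / p) * v s) volume a b :=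
  ((continuousOn_exp_mul hv).mono hab).intervalIntegrable

lemma traj_eq_exp_mul (hv : ContinuousOn v (Icc 0 t)) (hσ : σ ∈ Icc 0 t) :
    traj p y t v σ = exp (-σ / p) * (traj p y t v 0 - ∫ s in (0:ℝ)..σ, exp (s / p) * v s) := by
  have hsplit : (∫ s in (0:ℝ)..t, exp (s / p) * v s) - ∫ s in (0:ℝ)..σ, exp (s / p) * v s
      = ∫ s in σ..t, exp (s / p) * v s :=
    intervalIntegral.integral_interval_sub_left
      (intervalIntegrable_exp_mul hv (by rw [uIcc_of_le (hσ.1.trans hσ.2)]))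
      (intervalIntegrable_exp_mul hv (by rw [uIcc_of_le hσ.1]; exact Icc_subset_Icc_right hσ.2))
  have hshift : ∀ s, exp ((s - σ) / p) = exp (-σ / p) * exp (s / p) := fun s => by
    rw [← exp_add]; ring_nf
  simp only [traj, sub_zero]
  rw [add_sub_assoc, hsplit, hshift, mul_add, ← intervalIntegral.integral_const_mul]
  simp only [hshift, mul_assoc]

lemma continuousOn_traj (ht : 0 ≤ t) (hv : ContinuousOn v (Icc 0 t)) :
    ContinuousOn (traj p y t v) (Icc 0 t) := by
  have hprim : ContinuousOn (fun σ => ∫ s in (0:ℝ)..σ, exp (s / p) * v s) (Icc 0 t) := by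
    have := intervalIntegral.continuousOn_primitive_interval
      (by rw [uIcc_of_le ht]
          exact (continuousOn_exp_mul (p := p) hv).integrableOn_Icc (μ := volume))
    rwa [uIcc_of_le ht] at this
  refine ContinuousOn.congr ?_ fun σ hσ => traj_eq_exp_mul hv hσ
  exact (continuous_exp.comp (continuous_neg.div_const p)).continuousOn.mul
    (continuousOn_const.sub hprim)

lemma hasDerivAt_traj (hv : ContinuousOn v (Icc 0 t)) (hσ : σ ∈ Ioo 0 t) :
    HasDerivAt (traj p y t v) (-traj p y t v σ / p - v σ) σ := by
  have hnhds : Icc 0 t ∈ 𝓝 σ := Icc_mem_nhds hσ.1 hσ.2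
  have hcont := continuousOn_exp_mul (p := p) hv
  have hprim : HasDerivAt (fun σ => ∫ s in (0:ℝ)..σ, exp (s / p) * v s)
      (exp (σ / p) * v σ) σ :=
    intervalIntegral.integral_hasDerivAt_right
      (intervalIntegrable_exp_mul hv
        (by rw [uIcc_of_le hσ.1.le]; exact Icc_subset_Icc_right hσ.2.le))
      (hcont.stronglyMeasurableAtFilter_nhdsWithin measurableSet_Icc σ |>.filter_mono
        (le_of_eq (nhdsWithin_eq_nhds.2 hnhds).symm))
      (hcont.continuousAt hnhds)
  have hexp : HasDerivAt (fun σ : ℝ => exp (-σ / p)) (exp (-σ / p) * (-1 / p)) σ :=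
    ((hasDerivAt_neg σ).div_const p).exp
  have hformula := hexp.mul ((hasDerivAt_const σ (traj p y t v 0)).sub hprim)
  refine (hformula.congr_of_eventuallyEq (eventuallyEq_of_mem hnhds
    fun x hx => traj_eq_exp_mul hv hx)).congr_deriv ?_
  rw [traj_eq_exp_mul hv (Ioo_subset_Icc_self hσ)]
  have hcancel : exp (-σ / p) * exp (σ / p) = 1 := by rw [← exp_add]; ring_nf; exact exp_zero
  simp only [Pi.sub_apply]
  linear_combination (-v σ) * hcancel

lemma le_traj (hp : 0 ≤ p) (hy : 0 ≤ y) (hv : ∀ s ∈ Icc 0 t, 0 ≤ v s) (hσ : σ ∈ Icc 0 t) :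
    y ≤ traj p y t v σ := by
  have hint : 0 ≤ ∫ s in σ..t, exp ((s - σ) / p) * v s :=
    intervalIntegral.integral_nonneg hσ.2 fun s hs =>
      mul_nonneg (exp_nonneg _) (hv s ⟨hσ.1.trans hs.1, hs.2⟩)
  have hexp : 1 ≤ exp ((t - σ) / p) := one_le_exp (div_nonneg (by linarith [hσ.2]) hp)
  unfold traj
  nlinarith

lemma traj_pos (hp : 0 ≤ p) (hy : 0 < y) (hv : ∀ s ∈ Icc 0 t, 0 < v s) (hσ : σ ∈ Icc 0 t) :
    0 < traj p y t v σ :=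
  hy.trans_le (le_traj hp hy.le (fun s hs => (hv s hs).le) hσ)

end Trajectory

section SwitchState

variable {p t y : ℝ} {v : ℝ → ℝ} {σ : ℝ}

noncomputable def switchState (p t y : ℝ) (v : ℝ → ℝ) (σ : ℝ) : ℝ :=
  (traj p y t v σ + p) * exp (σ / p) - p

lemma traj_le_switchState (hp : 0 ≤ p) (hZ : 0 ≤ traj p y t v σ) (hσ : 0 ≤ σ) :
    traj p y t v σ ≤ switchState p t y v σ := by
  have hexp : 1 ≤ exp (σ / p) := one_le_exp (div_nonneg hσ hp)
  unfold switchState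
  nlinarith

lemma continuousOn_switchState (ht : 0 ≤ t) (hv : ContinuousOn v (Icc 0 t)) :
    ContinuousOn (switchState p t y v) (Icc 0 t) :=
  (((continuousOn_traj ht hv).add continuousOn_const).mul
    (continuous_exp.comp (continuous_id.div_const p)).continuousOn).sub continuousOn_const

lemma hasDerivAt_switchState (hp : p ≠ 0) (hv : ContinuousOn v (Icc 0 t)) (hσ : σ ∈ Ioo 0 t) :
    HasDerivAt (switchState p t y v) ((1 - v σ) * exp (σ / p)) σ := by
  have hexp : HasDerivAt (fun σ : ℝ => exp (σ / p)) (exp (σ / p) * (1 / p)) σ := by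
    simpa using ((hasDerivAt_id σ).div_const p).exp
  refine ((((hasDerivAt_traj hv hσ).add_const p).mul hexp).sub_const p).congr_deriv ?_
  field_simp
  ring

end SwitchState

section WeightedPrimitive

variable {p : ℝ} {h : ℝ → ℝ}

noncomputable def weightedPrimitive (p : ℝ) (h : ℝ → ℝ) (x : ℝ) : ℝ :=
  ∫ ξ in (1:ℝ)..x, deriv h ξ / (ξ + p)

lemma continuousOn_deriv_div_add (hp : 0 ≤ p) (hh : ContDiffOn ℝ 2 h (Ioi 0)) :
    ContinuousOn (fun ξ => deriv h ξ / (ξ + p)) (Ioi 0) :=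
  (continuousOn_deriv_of_contDiffOn_Ioi hh).div (continuousOn_id.add continuousOn_const)
    fun _ hξ => (add_pos_of_pos_of_nonneg hξ hp).ne'

lemma intervalIntegrable_deriv_div_add (hp : 0 ≤ p) (hh : ContDiffOn ℝ 2 h (Ioi 0)) {a b : ℝ}
    (ha : 0 < a) (hb : 0 < b) :
    IntervalIntegrable (fun ξ => deriv h ξ / (ξ + p)) volume a b :=
  ((continuousOn_deriv_div_add hp hh).mono fun _ hξ =>
    (lt_min ha hb).trans_le hξ.1).intervalIntegrable

lemma hasDerivAt_weightedPrimitive (hp : 0 ≤ p) (hh : ContDiffOn ℝ 2 h (Ioi 0)) {x : ℝ}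
    (hx : 0 < x) : HasDerivAt (weightedPrimitive p h) (deriv h x / (x + p)) x :=
  intervalIntegral.integral_hasDerivAt_right
    (intervalIntegrable_deriv_div_add hp hh one_pos hx)
    ((continuousOn_deriv_div_add hp hh).stronglyMeasurableAtFilter isOpen_Ioi x hx)
    ((continuousOn_deriv_div_add hp hh).continuousAt (Ioi_mem_nhds hx))

lemma mul_weightedPrimitive_sub_le (hp : 0 ≤ p) (hh : ContDiffOn ℝ 2 h (Ioi 0))
    (hhdec : AntitoneOn h (Ioi 0)) {a b : ℝ} (ha : 0 < a) (hab : a ≤ b) :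
    (a + p) * (weightedPrimitive p h a - weightedPrimitive p h b) ≤ h a - h b := by
  have hb : 0 < b := ha.trans_le hab
  have hsub : uIcc a b ⊆ Ioi 0 := by
    rw [uIcc_of_le hab]; exact fun ξ hξ => ha.trans_le hξ.1
  have hdiff : weightedPrimitive p h b - weightedPrimitive p h a
      = ∫ ξ in a..b, deriv h ξ / (ξ + p) :=
    intervalIntegral.integral_interval_sub_left
      (intervalIntegrable_deriv_div_add hp hh one_pos hb)
      (intervalIntegrable_deriv_div_add hp hh one_pos ha)
  have hftc : ∫ ξ in a..b, deriv h ξ = h b - h a :=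
    intervalIntegral.integral_eq_sub_of_hasDerivAt
      (fun ξ hξ => hasDerivAt_of_contDiffOn_Ioi hh (hsub hξ))
      ((continuousOn_deriv_of_contDiffOn_Ioi hh).mono hsub).intervalIntegrable
  have hmono : ∫ ξ in a..b, deriv h ξ / (a + p) ≤ ∫ ξ in a..b, deriv h ξ / (ξ + p) := by
    refine intervalIntegral.integral_mono_on hab
      (((continuousOn_deriv_of_contDiffOn_Ioi hh).mono hsub).intervalIntegrable.div_const _)
      (intervalIntegrable_deriv_div_add hp hh ha hb) fun ξ hξ => ?_
    have hd : deriv h ξ ≤ 0 := hhdec.deriv_nonpos isOpen_Ioi (ha.trans_le hξ.1)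
    rw [div_le_div_iff₀ (by linarith) (by linarith [hξ.1])]
    nlinarith [hξ.1]
  rw [intervalIntegral.integral_div, hftc, ← hdiff, div_le_iff₀ (by linarith)] at hmono
  linarith

end WeightedPrimitive

noncomputable def switchRate (p y θ Z w hZ hu a b c S : ℝ) : ℝ :=
  θ / p * (hZ - w * hu) + (1 + y / p) * (b - a) + (y + p) * (w - 1) / (Z + p) * (c - a)
    + θ * (1 - w) * S

section SwitchRate

variable {p y θ Z w hZ hu hζ a b c S : ℝ}

lemma switchRate_eq (hp : p ≠ 0) (hZp : Z + p ≠ 0) :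
    switchRate p y θ Z w hZ hu a b c S
      = (θ * (Z + p) * (hZ - w * hu) + (p + y) * (Z + p) * (b - a)
          + p * (y + p) * (w - 1) * (c - a) + θ * (1 - w) * S * (p * (Z + p)))
        / (p * (Z + p)) := by
  unfold switchRate
  field_simp

lemma switchRate_nonneg (hp : 0 < p) (hy : 0 ≤ y) (hθ : 0 ≤ θ) (hZ0 : 0 ≤ Z) (hw0 : 0 ≤ w)
    (hw1 : w ≤ 1) (ha : a ≤ 0) (hc : c ≤ 0) (hhZ : 0 ≤ hZ) (hhζ : 0 ≤ hζ) (hhu : hu ≤ hZ)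
    (hb : w * a ≤ b) (hS : -((Z + p) * S) ≤ hZ - hζ) :
    0 ≤ switchRate p y θ Z w hZ hu a b c S := by
  have hZp : 0 < Z + p := by linarith
  rw [switchRate_eq hp.ne' hZp.ne']
  refine div_nonneg ?_ (by positivity)
  have h1w : 0 ≤ 1 - w := by linarith
  -- the numerator is the sum of these seven products
  linarith [mul_nonneg (by positivity : 0 ≤ θ * (Z + p) * w) (sub_nonneg.2 hhu),
    mul_nonneg (by positivity : 0 ≤ (p + y) * (Z + p)) (sub_nonneg.2 hb),
    mul_nonneg (by positivity : 0 ≤ p * (y + p) * (1 - w)) (neg_nonneg.2 hc),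
    mul_nonneg (by positivity : 0 ≤ θ * (1 - w) * p) (by linarith : 0 ≤ hZ - hζ + (Z + p) * S),
    mul_nonneg (by positivity : 0 ≤ θ * (1 - w) * p) hhζ,
    mul_nonneg (by positivity : 0 ≤ (1 - w) * θ * Z) hhZ,
    mul_nonneg (by positivity : 0 ≤ (1 - w) * (y + p) * Z) (neg_nonneg.2 ha)]

lemma switchRate_nonpos (hp : 0 < p) (hy : 0 ≤ y) (hθ : 0 ≤ θ) (hZ0 : 0 ≤ Z) (hw : 1 ≤ w)
    (ha : a ≤ 0) (hc : c ≤ 0) (hhZ : 0 ≤ hZ) (hhζ : 0 ≤ hζ)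
    (hhu : w * hZ - (w - 1) * Z * a ≤ w * hu) (hb : b ≤ w * a)
    (hS : -((Z + p) * S) ≤ hZ - hζ) :
    switchRate p y θ Z w hZ hu a b c S ≤ 0 := by
  have hZp : 0 < Z + p := by linarith
  rw [switchRate_eq hp.ne' hZp.ne']
  refine div_nonpos_of_nonpos_of_nonneg ?_ (by positivity)
  have hw1 : 0 ≤ w - 1 := by linarith
  -- minus the numerator is the sum of these eight products
  linarith [mul_nonneg (by positivity : 0 ≤ θ * (Z + p)) (sub_nonneg.2 hhu),
    mul_nonneg (by positivity : 0 ≤ (p + y) * (Z + p)) (sub_nonneg.2 hb),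
    mul_nonneg (by positivity : 0 ≤ p * (y + p) * (w - 1)) (neg_nonneg.2 hc),
    mul_nonneg (by positivity : 0 ≤ θ * (w - 1) * p) (by linarith : 0 ≤ hZ - hζ + (Z + p) * S),
    mul_nonneg (by positivity : 0 ≤ θ * (w - 1) * p) hhζ,
    mul_nonneg (by positivity : 0 ≤ (w - 1) * θ * (Z + p) * Z) (neg_nonneg.2 ha),
    mul_nonneg (by positivity : 0 ≤ (w - 1) * θ * Z) hhZ,
    mul_nonneg (by positivity : 0 ≤ (w - 1) * (y + p) * Z) (neg_nonneg.2 ha)]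

end SwitchRate

section SwitchedCost

variable {p t y : ℝ} {h v : ℝ → ℝ} {σ : ℝ}

lemma continuousOn_comp_traj_div {g : ℝ → ℝ} (hg : ContinuousOn g (Ioi 0)) (hp : 0 ≤ p)
    (ht : 0 ≤ t) (hy : 0 < y) (hv : ContinuousOn v (Icc 0 t))
    (hvpos : ∀ s ∈ Icc 0 t, 0 < v s) :
    ContinuousOn (fun s => g (traj p y t v s / v s)) (Icc 0 t) :=
  hg.comp ((continuousOn_traj ht hv).div hv fun s hs => (hvpos s hs).ne') fun s hs =>
    div_pos (traj_pos hp hy hvpos hs) (hvpos s hs)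

lemma continuousOn_weighted_comp_traj_div (hp : 0 ≤ p) (ht : 0 ≤ t) (hy : 0 < y)
    (hh : ContinuousOn h (Ioi 0)) (hv : ContinuousOn v (Icc 0 t))
    (hvpos : ∀ s ∈ Icc 0 t, 0 < v s) :
    ContinuousOn (fun s => h (traj p y t v s / v s) * exp (-(t - s) / p) * v s) (Icc 0 t) :=
  ((continuousOn_comp_traj_div hh hp ht hy hv hvpos).mul
    (continuous_exp.comp ((continuous_const.sub continuous_id).neg.div_const p)).continuousOn).mul
      hv

noncomputable def costDensity (p t y : ℝ) (h v : ℝ → ℝ) (s : ℝ) : ℝ :=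
  1 / p * (h (traj p y t v s / v s) * exp (-(t - s) / p) * v s)
    - (1 + y / p) * deriv h (traj p y t v s / v s)

lemma continuousOn_costDensity (hp : 0 ≤ p) (ht : 0 ≤ t) (hy : 0 < y)
    (hh : ContDiffOn ℝ 2 h (Ioi 0)) (hv : ContinuousOn v (Icc 0 t))
    (hvpos : ∀ s ∈ Icc 0 t, 0 < v s) :
    ContinuousOn (costDensity p t y h v) (Icc 0 t) :=
  (continuousOn_const.mul
    (continuousOn_weighted_comp_traj_div hp ht hy hh.continuousOn hv hvpos)).sub
    (continuousOn_const.mul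
      (continuousOn_comp_traj_div (continuousOn_deriv_of_contDiffOn_Ioi hh) hp ht hy hv hvpos))

lemma Ffun_eq_integral_costDensity (hp : 0 ≤ p) (ht : 0 ≤ t) (hy : 0 < y)
    (hh : ContDiffOn ℝ 2 h (Ioi 0)) (hv : ContinuousOn v (Icc 0 t))
    (hvpos : ∀ s ∈ Icc 0 t, 0 < v s) :
    Ffun p h t y v = ∫ s in (0:ℝ)..t, costDensity p t y h v s := by
  have hIcc : uIcc 0 t ⊆ Icc 0 t := (uIcc_of_le ht).subset
  have i1 : IntervalIntegrable
      (fun s => h (traj p y t v s / v s) * exp (-(t - s) / p) * v s) volume 0 t :=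
    ((continuousOn_weighted_comp_traj_div hp ht hy hh.continuousOn hv hvpos).mono
      hIcc).intervalIntegrable
  have i2 : IntervalIntegrable (fun s => deriv h (traj p y t v s / v s)) volume 0 t :=
    ((continuousOn_comp_traj_div (continuousOn_deriv_of_contDiffOn_Ioi hh) hp ht hy hv
      hvpos).mono hIcc).intervalIntegrable
  unfold Ffun costDensity
  rw [intervalIntegral.integral_sub (i1.const_mul _) (i2.const_mul _),
    intervalIntegral.integral_const_mul, intervalIntegral.integral_const_mul]

/-- `switchedCost σ` is `Ffun` at the control equal to `1` on `[0, σ]` and to `v` on `[σ, t]`.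
On `[0, σ]` its trajectory is `(Z + p) e^{(σ - s)/p} - p`, where `Z = traj σ`, starting at
`switchState σ`; substituting `ξ = z(s)` and integrating by parts once gives the cost on `[0, σ]`
in closed form. -/
noncomputable def switchedCost (p t y : ℝ) (h v : ℝ → ℝ) (σ : ℝ) : ℝ :=
  (∫ s in σ..t, costDensity p t y h v s)
    + exp (-(t - σ) / p) * h (traj p y t v σ)
    - exp (-t / p) * h (switchState p t y v σ)
    + (exp (-(t - σ) / p) * (traj p y t v σ + p) - (y + p))
      * (weightedPrimitive p h (switchState p t y v σ) - weightedPrimitive p h (traj p y t v σ))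

noncomputable def switchedCostDeriv (p t y : ℝ) (h v : ℝ → ℝ) (σ : ℝ) : ℝ :=
  switchRate p y (exp (-(t - σ) / p)) (traj p y t v σ) (v σ) (h (traj p y t v σ))
    (h (traj p y t v σ / v σ)) (deriv h (traj p y t v σ)) (deriv h (traj p y t v σ / v σ))
    (deriv h (switchState p t y v σ))
    (weightedPrimitive p h (switchState p t y v σ) - weightedPrimitive p h (traj p y t v σ))

lemma hasDerivAt_switchedCost (hp : 0 < p) (hy : 0 < y) (hh : ContDiffOn ℝ 2 h (Ioi 0))
    (hv : ContinuousOn v (Icc 0 t)) (hvpos : ∀ s ∈ Icc 0 t, 0 < v s) (hσ : σ ∈ Ioo 0 t) :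
    HasDerivAt (switchedCost p t y h v) (switchedCostDeriv p t y h v σ) σ := by
  have hσ' : σ ∈ Icc 0 t := Ioo_subset_Icc_self hσ
  have hnhds : Icc 0 t ∈ 𝓝 σ := Icc_mem_nhds hσ.1 hσ.2
  have hZ : 0 < traj p y t v σ := traj_pos hp.le hy hvpos hσ'
  have hζ : 0 < switchState p t y v σ :=
    hZ.trans_le (traj_le_switchState hp.le hZ.le hσ.1.le)
  have hcost := continuousOn_costDensity hp.le (hσ.1.trans hσ.2).le hy hh hv hvpos
  have dI : HasDerivAt (fun σ => ∫ s in σ..t, costDensity p t y h v s)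
      (-costDensity p t y h v σ) σ :=
    intervalIntegral.integral_hasDerivAt_left
      ((hcost.mono
        (by rw [uIcc_of_le hσ.2.le]; exact Icc_subset_Icc_left hσ.1.le)).intervalIntegrable)
      (hcost.stronglyMeasurableAtFilter_nhdsWithin measurableSet_Icc σ |>.filter_mono
        (le_of_eq (nhdsWithin_eq_nhds.2 hnhds).symm))
      (hcost.continuousAt hnhds)
  have dθ : HasDerivAt (fun σ => exp (-(t - σ) / p)) (exp (-(t - σ) / p) * (1 / p)) σ := by
    simpa using (((hasDerivAt_const σ t).sub (hasDerivAt_id σ)).neg.div_const p).exp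
  have dZ := hasDerivAt_traj (p := p) (y := y) hv hσ
  have dζ := hasDerivAt_switchState (y := y) hp.ne' hv hσ
  have dhZ := (hasDerivAt_of_contDiffOn_Ioi hh hZ).comp σ dZ
  have dhζ := (hasDerivAt_of_contDiffOn_Ioi hh hζ).comp σ dζ
  have dΦZ := (hasDerivAt_weightedPrimitive hp.le hh hZ).comp σ dZ
  have dΦζ := (hasDerivAt_weightedPrimitive hp.le hh hζ).comp σ dζ
  refine ((((dI.add (dθ.mul dhZ)).sub (dhζ.const_mul (exp (-t / p)))).add
    (((dθ.mul (dZ.add_const p)).sub_const (y + p)).mul (dΦζ.sub dΦZ)))).congr_deriv ?_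
  have hexp : exp (-t / p) = exp (-(t - σ) / p) / exp (σ / p) := by
    rw [eq_div_iff (exp_pos _).ne', ← exp_add]; ring_nf
  have hζp : switchState p t y v σ + p = (traj p y t v σ + p) * exp (σ / p) := by
    unfold switchState; ring
  have hvσ : v σ ≠ 0 := (hvpos σ hσ').ne'
  simp only [switchedCostDeriv, switchRate, costDensity, Function.comp_def, Pi.sub_apply,
    Pi.mul_apply, hexp, hζp]
  field_simp
  ring

lemma switchedCost_zero (hp : 0 ≤ p) (ht : 0 ≤ t) (hy : 0 < y)
    (hh : ContDiffOn ℝ 2 h (Ioi 0)) (hv : ContinuousOn v (Icc 0 t))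
    (hvpos : ∀ s ∈ Icc 0 t, 0 < v s) :
    switchedCost p t y h v 0 = Ffun p h t y v := by
  simp [switchedCost, switchState, traj, Ffun_eq_integral_costDensity hp ht hy hh hv hvpos]

lemma switchedCost_self :
    switchedCost p t y h v t = h y - exp (-t / p) * h ((y + p) * exp (t / p) - p) := by
  simp [switchedCost, switchState, traj_self]

lemma continuousOn_switchedCost (hp : 0 < p) (ht : 0 ≤ t) (hy : 0 < y)
    (hh : ContDiffOn ℝ 2 h (Ioi 0)) (hv : ContinuousOn v (Icc 0 t))
    (hvpos : ∀ s ∈ Icc 0 t, 0 < v s) :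
    ContinuousOn (switchedCost p t y h v) (Icc 0 t) := by
  have hI : ContinuousOn (fun σ => ∫ s in σ..t, costDensity p t y h v s) (Icc 0 t) := by
    have := intervalIntegral.continuousOn_primitive_interval_left (by
      rw [uIcc_of_le ht]
      exact (continuousOn_costDensity hp.le ht hy hh hv hvpos).integrableOn_Icc (μ := volume))
    rwa [uIcc_of_le ht] at this
  have hθ : ContinuousOn (fun σ => exp (-(t - σ) / p)) (Icc 0 t) :=
    (continuous_exp.comp ((continuous_const.sub continuous_id).neg.div_const p)).continuousOn
  have hZ := continuousOn_traj (p := p) (y := y) ht hv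
  have hζ := continuousOn_switchState (p := p) (y := y) ht hv
  have hZpos : MapsTo (traj p y t v) (Icc 0 t) (Ioi 0) := fun σ hσ =>
    traj_pos hp.le hy hvpos hσ
  have hζpos : MapsTo (switchState p t y v) (Icc 0 t) (Ioi 0) := fun σ hσ =>
    (hZpos hσ).trans_le (traj_le_switchState hp.le (hZpos hσ).le hσ.1)
  have hΦ : ContinuousOn (weightedPrimitive p h) (Ioi 0) := fun x hx =>
    (hasDerivAt_weightedPrimitive hp.le hh hx).continuousAt.continuousWithinAt
  exact (((hI.add (hθ.mul (hh.continuousOn.comp hZ hZpos))).sub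
    (continuousOn_const.mul (hh.continuousOn.comp hζ hζpos))).add
    (((hθ.mul (hZ.add continuousOn_const)).sub continuousOn_const).mul
      ((hΦ.comp hζ hζpos).sub (hΦ.comp hZ hZpos))))

end SwitchedCost

section Comparison

variable {p t y : ℝ} {h v : ℝ → ℝ} {σ : ℝ}

lemma switchedCostDeriv_nonneg (hp : 0 < p) (hy : 0 < y) (hh : ContDiffOn ℝ 2 h (Ioi 0))
    (hhnonneg : ∀ z > (0:ℝ), 0 ≤ h z) (hhdec : AntitoneOn h (Ioi 0))
    (hineq : ∀ z > (0:ℝ), 0 ≤ z * iteratedDeriv 2 h z + deriv h z)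
    (hvpos : ∀ s ∈ Icc 0 t, 0 < v s) (hσ : σ ∈ Icc 0 t) (hv1 : v σ ≤ 1) :
    0 ≤ switchedCostDeriv p t y h v σ := by
  have hZ : 0 < traj p y t v σ := traj_pos hp.le hy hvpos hσ
  have hZζ : traj p y t v σ ≤ switchState p t y v σ := traj_le_switchState hp.le hZ.le hσ.1
  have hζ : 0 < switchState p t y v σ := hZ.trans_le hZζ
  have hw : 0 < v σ := hvpos σ hσ
  have hZu : traj p y t v σ ≤ traj p y t v σ / v σ := le_div_self hZ.le hw hv1
  exact switchRate_nonneg hp hy.le (exp_pos _).le hZ.le hw.le hv1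
    (hhdec.deriv_nonpos isOpen_Ioi hZ) (hhdec.deriv_nonpos isOpen_Ioi hζ)
    (hhnonneg _ hZ) (hhnonneg _ hζ) (hhdec hZ (hZ.trans_le hZu) hZu)
    (mul_le_apply_div_of_monotoneOn_mul (monotoneOn_mul_deriv hh hineq) hZ hw hv1)
    (by linarith [mul_weightedPrimitive_sub_le hp.le hh hhdec hZ hZζ])

lemma switchedCostDeriv_nonpos (hp : 0 < p) (hy : 0 < y) (hh : ContDiffOn ℝ 2 h (Ioi 0))
    (hhnonneg : ∀ z > (0:ℝ), 0 ≤ h z) (hhdec : AntitoneOn h (Ioi 0))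
    (hhconv : ConvexOn ℝ (Ioi 0) h)
    (hineq : ∀ z > (0:ℝ), 0 ≤ z * iteratedDeriv 2 h z + deriv h z)
    (hv1 : ∀ s ∈ Icc 0 t, 1 ≤ v s) (hσ : σ ∈ Icc 0 t) :
    switchedCostDeriv p t y h v σ ≤ 0 := by
  have hvpos : ∀ s ∈ Icc 0 t, 0 < v s := fun s hs => one_pos.trans_le (hv1 s hs)
  have hZ : 0 < traj p y t v σ := traj_pos hp.le hy hvpos hσ
  have hZζ : traj p y t v σ ≤ switchState p t y v σ := traj_le_switchState hp.le hZ.le hσ.1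
  have hζ : 0 < switchState p t y v σ := hZ.trans_le hZζ
  have hw : 0 < v σ := hvpos σ hσ
  have hu : 0 < traj p y t v σ / v σ := div_pos hZ hw
  have htangent := hhconv.add_deriv_mul_sub_le hu hZ (div_le_self hZ.le (hv1 σ hσ))
    ((hasDerivAt_of_contDiffOn_Ioi hh hZ).differentiableAt)
  have hcancel : v σ * (traj p y t v σ / v σ) = traj p y t v σ := mul_div_cancel₀ _ hw.ne'
  exact switchRate_nonpos hp hy.le (exp_pos _).le hZ.le (hv1 σ hσ)
    (hhdec.deriv_nonpos isOpen_Ioi hZ) (hhdec.deriv_nonpos isOpen_Ioi hζ)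
    (hhnonneg _ hZ) (hhnonneg _ hζ)
    (by linear_combination mul_le_mul_of_nonneg_left htangent hw.le
      - deriv h (traj p y t v σ) * hcancel)
    (apply_div_le_mul_of_monotoneOn_mul (monotoneOn_mul_deriv hh hineq) hZ (hv1 σ hσ))
    (by linarith [mul_weightedPrimitive_sub_le hp.le hh hhdec hZ hZζ])

lemma Ffun_le_of_le_one (hp : 0 < p) (ht : 0 < t) (hy : 0 < y) (hh : ContDiffOn ℝ 2 h (Ioi 0))
    (hhnonneg : ∀ z > (0:ℝ), 0 ≤ h z) (hhdec : AntitoneOn h (Ioi 0))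
    (hineq : ∀ z > (0:ℝ), 0 ≤ z * iteratedDeriv 2 h z + deriv h z)
    (hv : ContinuousOn v (Icc 0 t)) (hvle : ∀ s ∈ Icc 0 t, 0 < v s ∧ v s ≤ 1) :
    Ffun p h t y v ≤ h y - exp (-t / p) * h ((y + p) * exp (t / p) - p) := by
  have hvpos : ∀ s ∈ Icc 0 t, 0 < v s := fun s hs => (hvle s hs).1
  have hmono : MonotoneOn (switchedCost p t y h v) (Icc 0 t) := by
    refine monotoneOn_of_hasDerivWithinAt_nonneg (f' := switchedCostDeriv p t y h v)
      (convex_Icc 0 t)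
      (continuousOn_switchedCost hp ht.le hy hh hv hvpos) ?_ ?_ <;> rw [interior_Icc]
    · exact fun σ hσ => (hasDerivAt_switchedCost hp hy hh hv hvpos hσ).hasDerivWithinAt
    · exact fun σ hσ => switchedCostDeriv_nonneg hp hy hh hhnonneg hhdec hineq hvpos
        (Ioo_subset_Icc_self hσ) (hvle σ (Ioo_subset_Icc_self hσ)).2
  have hends := hmono (left_mem_Icc.2 ht.le) (right_mem_Icc.2 ht.le) ht.le
  rwa [switchedCost_zero hp.le ht.le hy hh hv hvpos, switchedCost_self] at hends

lemma le_Ffun_of_one_le (hp : 0 < p) (ht : 0 < t) (hy : 0 < y) (hh : ContDiffOn ℝ 2 h (Ioi 0))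
    (hhnonneg : ∀ z > (0:ℝ), 0 ≤ h z) (hhdec : AntitoneOn h (Ioi 0))
    (hhconv : ConvexOn ℝ (Ioi 0) h)
    (hineq : ∀ z > (0:ℝ), 0 ≤ z * iteratedDeriv 2 h z + deriv h z)
    (hv : ContinuousOn v (Icc 0 t)) (hv1 : ∀ s ∈ Icc 0 t, 1 ≤ v s) :
    h y - exp (-t / p) * h ((y + p) * exp (t / p) - p) ≤ Ffun p h t y v := by
  have hvpos : ∀ s ∈ Icc 0 t, 0 < v s := fun s hs => one_pos.trans_le (hv1 s hs)
  have hanti : AntitoneOn (switchedCost p t y h v) (Icc 0 t) := by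
    refine antitoneOn_of_hasDerivWithinAt_nonpos (f' := switchedCostDeriv p t y h v)
      (convex_Icc 0 t)
      (continuousOn_switchedCost hp ht.le hy hh hv hvpos) ?_ ?_ <;> rw [interior_Icc]
    · exact fun σ hσ => (hasDerivAt_switchedCost hp hy hh hv hvpos hσ).hasDerivWithinAt
    · exact fun σ hσ => switchedCostDeriv_nonpos hp hy hh hhnonneg hhdec hhconv hineq hv1
        (Ioo_subset_Icc_self hσ)
  have hends := hanti (left_mem_Icc.2 ht.le) (right_mem_Icc.2 ht.le) ht.le
  rwa [switchedCost_zero hp.le ht.le hy hh hv hvpos, switchedCost_self] at hends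

lemma Ffun_one (hp : 0 < p) (ht : 0 < t) (hy : 0 < y) (hh : ContDiffOn ℝ 2 h (Ioi 0))
    (hhnonneg : ∀ z > (0:ℝ), 0 ≤ h z) (hhdec : AntitoneOn h (Ioi 0))
    (hhconv : ConvexOn ℝ (Ioi 0) h)
    (hineq : ∀ z > (0:ℝ), 0 ≤ z * iteratedDeriv 2 h z + deriv h z) :
    Ffun p h t y (fun _ => 1) = h y - exp (-t / p) * h ((y + p) * exp (t / p) - p) :=
  le_antisymm
    (Ffun_le_of_le_one hp ht hy hh hhnonneg hhdec hineq continuousOn_const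
      fun _ _ => ⟨one_pos, le_rfl⟩)
    (le_Ffun_of_one_le hp ht hy hh hhnonneg hhdec hhconv hineq continuousOn_const
      fun _ _ => le_rfl)

end Comparison

lemma lintegral_Ioc_ofReal_eq_ofReal_integral {f : ℝ → ℝ} {a b : ℝ} (hab : a ≤ b)
    (hf : ContinuousOn f (Icc a b)) (hf0 : ∀ x ∈ Icc a b, 0 ≤ f x) :
    ∫⁻ x in Ioc a b, ENNReal.ofReal (f x) = ENNReal.ofReal (∫ x in a..b, f x) := by
  rw [intervalIntegral.integral_of_le hab, ofReal_integral_eq_lintegral_ofReal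
    ((hf.integrableOn_Icc).mono_set Ioc_subset_Icc_self)]
  filter_upwards [ae_restrict_mem measurableSet_Ioc] with x hx
  exact hf0 x (Ioc_subset_Icc_self hx)

lemma FfunL_eq_ofReal_Ffun {p t y : ℝ} {h v : ℝ → ℝ} (hp : 0 < p) (ht : 0 ≤ t) (hy : 0 < y)
    (hh : ContDiffOn ℝ 2 h (Ioi 0)) (hhnonneg : ∀ z > (0:ℝ), 0 ≤ h z)
    (hhdec : AntitoneOn h (Ioi 0)) (hv : ContinuousOn v (Icc 0 t))
    (hvpos : ∀ s ∈ Icc 0 t, 0 < v s) :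
    FfunL p h t y v = ENNReal.ofReal (Ffun p h t y v) := by
  have hu : ∀ s ∈ Icc 0 t, 0 < traj p y t v s / v s := fun s hs =>
    div_pos (traj_pos hp.le hy hvpos hs) (hvpos s hs)
  have hf1 : ∀ s ∈ Icc 0 t, 0 ≤ h (traj p y t v s / v s) * exp (-(t - s) / p) * v s :=
    fun s hs => by have := hhnonneg _ (hu s hs); have := hvpos s hs; positivity
  have hf2 : ∀ s ∈ Icc 0 t, 0 ≤ -deriv h (traj p y t v s / v s) := fun s hs =>
    neg_nonneg.2 (hhdec.deriv_nonpos isOpen_Ioi (hu s hs))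
  unfold FfunL Ffun
  rw [lintegral_Ioc_ofReal_eq_ofReal_integral ht
      (continuousOn_weighted_comp_traj_div hp.le ht hy hh.continuousOn hv hvpos) hf1,
    lintegral_Ioc_ofReal_eq_ofReal_integral (f := fun s => -deriv h (traj p y t v s / v s)) ht
      (continuousOn_comp_traj_div (continuousOn_deriv_of_contDiffOn_Ioi hh) hp.le ht hy hv
        hvpos).neg hf2,
    ← ENNReal.ofReal_mul (by positivity), ← ENNReal.ofReal_mul (by positivity),
    ← ENNReal.ofReal_add (mul_nonneg (by positivity) (intervalIntegral.integral_nonneg ht hf1))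
      (mul_nonneg (by positivity) (intervalIntegral.integral_nonneg ht hf2)),
    intervalIntegral.integral_neg]
  ring_nf

theorem stmt_19_general (p t y : ℝ) (hp : 0 < p) (ht : 0 < t) (hy : 0 < y)
    (h : ℝ → ℝ)
    (hh2 : ContDiffOn ℝ 2 h (Set.Ioi 0))
    (hhnonneg : ∀ z > (0:ℝ), 0 ≤ h z)
    (hhdec : AntitoneOn h (Set.Ioi 0))
    (hhconv : ConvexOn ℝ (Set.Ioi 0) h)
    (hineq : ∀ z > (0:ℝ), 0 ≤ z * iteratedDeriv 2 h z + deriv h z) :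
    (∀ v : ℝ → ℝ, ContinuousOn v (Set.Icc 0 t) →
      (∀ s ∈ Set.Icc 0 t, 0 < v s ∧ v s ≤ 1) →
      Ffun p h t y v ≤ Ffun p h t y (fun _ => 1)) ∧
    (∀ v : ℝ → ℝ, ContinuousOn v (Set.Icc 0 t) →
      (∀ s ∈ Set.Icc 0 t, 1 ≤ v s) →
      FfunL p h t y (fun _ => 1) ≤ FfunL p h t y v) := by
  have hFone := Ffun_one hp ht hy hh2 hhnonneg hhdec hhconv hineq
  refine ⟨fun v hv hvle => hFone ▸ Ffun_le_of_le_one hp ht hy hh2 hhnonneg hhdec hineq hv hvle,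
    fun v hv hv1 => ?_⟩
  rw [FfunL_eq_ofReal_Ffun hp ht.le hy hh2 hhnonneg hhdec continuousOn_const fun _ _ => one_pos,
    FfunL_eq_ofReal_Ffun hp ht.le hy hh2 hhnonneg hhdec hv fun s hs => one_pos.trans_le (hv1 s hs),
    hFone]
  exact ENNReal.ofReal_le_ofReal (le_Ffun_of_one_le hp ht hy hh2 hhnonneg hhdec hhconv hineq hv hv1)

/-- Theorem 7.1: for h C², nonnegative, decreasing, convex with
y h''(y) + h'(y) ≥ 0 and y ↦ y²h''(y) decreasing, the functional F(t,y,·) is maximized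
over {0 < v ≤ 1} at v ≡ 1 and minimized over {v ≥ 1} at v ≡ 1. -/
theorem stmt_19 (p t y : ℝ) (hp : 0 < p) (ht : 0 < t) (hy : 0 < y)
    (h : ℝ → ℝ)
    (hh2 : ContDiffOn ℝ 2 h (Set.Ioi 0))
    (hhnonneg : ∀ z > (0:ℝ), 0 ≤ h z)
    (hhdec : AntitoneOn h (Set.Ioi 0))
    (hhconv : ConvexOn ℝ (Set.Ioi 0) h)
    (hineq : ∀ z > (0:ℝ), 0 ≤ z * iteratedDeriv 2 h z + deriv h z)
    (hz2h : AntitoneOn (fun z => z ^ 2 * iteratedDeriv 2 h z) (Set.Ioi 0)) :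
    (∀ v : ℝ → ℝ, ContinuousOn v (Set.Icc 0 t) →
      (∀ s ∈ Set.Icc 0 t, 0 < v s ∧ v s ≤ 1) →
      Ffun p h t y v ≤ Ffun p h t y (fun _ => 1)) ∧
    (∀ v : ℝ → ℝ, ContinuousOn v (Set.Icc 0 t) →
      (∀ s ∈ Set.Icc 0 t, 1 ≤ v s) →
      FfunL p h t y (fun _ => 1) ≤ FfunL p h t y v) :=
  stmt_19_general p t y hp ht hy h hh2 hhnonneg hhdec hhconv hineq
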